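/- arXiv:2212.00439 — 3 statements merged into one kernel-verified Lean document; each statement's English description precedes it below -/
import Mathlib

section
/- Let $f:[a,b]\to X$ be a function of bounded variation with values in a metric space $(X,\rho)$, extended to $\mathbb{R}$ by $f(x)=f(a)$ for $x<a$ and $f(x)=f(b)$ for $x>b$. Then for every $\delta>0$, $\int_a^b V_{x-\delta}^{x+\delta}(f)\,dx \le 2\delta\, V_a^b(f)$, where $V_c^d(f)$ denotes the total variation of $f$ on $[c,d]$. -/
open Set MeasureTheory

/-- For a BV function `f : [a,b] → X`, extended constantly outside `[a,b]`,
`∫_a^b V_{x-δ}^{x+δ}(f) dx ≤ 2δ V_a^b(f)`. -/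
theorem stmt0 {X : Type*} [MetricSpace X] (a b : ℝ) (hab : a ≤ b) (f : ℝ → X)
    (hBV : BoundedVariationOn f (Set.Icc a b))
    (hleft : ∀ x < a, f x = f a) (hright : ∀ x > b, f x = f b)
    (δ : ℝ) (hδ : 0 < δ) :
    (∫ x in a..b, (eVariationOn f (Set.Icc (x - δ) (x + δ))).toReal)
      ≤ 2 * δ * (eVariationOn f (Set.Icc a b)).toReal := by
  set w : ℝ → ℝ := fun t => (eVariationOn f (Set.Icc a (min (max t a) b))).toReal with hw
  set M : ℝ := (eVariationOn f (Set.Icc a b)).toReal with hM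
  have hfin : ∀ {s : Set ℝ}, s ⊆ Set.Icc a b → eVariationOn f s ≠ ⊤ :=
    fun {s} hs => (hBV.mono hs)
  have hwmono : Monotone w := by
    intro s t hst
    apply ENNReal.toReal_mono (hfin (Icc_subset_Icc le_rfl (min_le_right _ _)))
    exact eVariationOn.mono f (Icc_subset_Icc le_rfl
      (min_le_min (max_le_max hst le_rfl) le_rfl))
  have hwnonneg : ∀ t, 0 ≤ w t := fun t => ENNReal.toReal_nonneg
  have hwle : ∀ t, w t ≤ M := by
    intro t
    apply ENNReal.toReal_mono (hfin (subset_rfl))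
    exact eVariationOn.mono f (Icc_subset_Icc le_rfl (min_le_right _ _))
  -- key pointwise identity
  have key : ∀ x ∈ Set.Icc a b,
      (eVariationOn f (Set.Icc (x - δ) (x + δ))).toReal = w (x + δ) - w (x - δ) := by
    intro x hx
    obtain ⟨hax, hxb⟩ := hx
    set c : ℝ := x - δ
    set d : ℝ := x + δ
    set c' : ℝ := max c a
    set d' : ℝ := min d b
    have hcc' : c ≤ c' := le_max_left _ _
    have hc'b : c' ≤ b := max_le (by simp only [c]; linarith) hab
    have had' : a ≤ d' := le_min (by simp only [d]; linarith) hab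
    have hc'd' : c' ≤ d' := by
      rcases le_total c a with h | h
      · simp [c', max_eq_right h, had']
      · refine le_min ?_ hc'b
        calc c' ≤ max d a := max_le_max (by simp only [c, d]; linarith) le_rfl
        _ = d := max_eq_left (le_min_iff.mp had').1
    have hd'd : d' ≤ d := min_le_left _ _
    have hac' : a ≤ c' := le_max_right _ _
    -- constancy pieces
    have hz1 : eVariationOn f (Set.Icc c c') = 0 := by
      rcases le_or_gt c a with h | h
      · apply eVariationOn.constant_on
        rintro - ⟨y, hy, rfl⟩ - ⟨z, hz, rfl⟩
        have hc' : c' = a := max_eq_right h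
        have hy' : f y = f a := by
          rcases lt_or_eq_of_le (hy.2.trans_eq hc') with h' | h'
          · exact hleft _ h'
          · rw [h']
        have hz' : f z = f a := by
          rcases lt_or_eq_of_le (hz.2.trans_eq hc') with h' | h'
          · exact hleft _ h'
          · rw [h']
        rw [hy', hz']
      · have : c' = c := max_eq_left h.le
        rw [this]
        exact eVariationOn.subsingleton f (by simp [Set.Icc_self])
    have hz2 : eVariationOn f (Set.Icc d' d) = 0 := by
      rcases le_or_gt b d with h | h
      · apply eVariationOn.constant_on
        rintro - ⟨y, hy, rfl⟩ - ⟨z, hz, rfl⟩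
        have hd' : d' = b := min_eq_right h
        have hy' : f y = f b := by
          rcases lt_or_eq_of_le (hd' ▸ hy.1) with h' | h'
          · exact hright _ h'
          · rw [← h']
        have hz' : f z = f b := by
          rcases lt_or_eq_of_le (hd' ▸ hz.1) with h' | h'
          · exact hright _ h'
          · rw [← h']
        rw [hy', hz']
      · have : d' = d := min_eq_left h.le
        rw [this]
        exact eVariationOn.subsingleton f (by simp [Set.Icc_self])
    -- splitting
    have split1 : eVariationOn f (Set.Icc c c') + eVariationOn f (Set.Icc c' d)
        = eVariationOn f (Set.Icc c d) := by
      have := eVariationOn.Icc_add_Icc f (s := Set.univ) hcc' (hc'd'.trans hd'd)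
        (Set.mem_univ c')
      simpa using this
    have split2 : eVariationOn f (Set.Icc c' d') + eVariationOn f (Set.Icc d' d)
        = eVariationOn f (Set.Icc c' d) := by
      have := eVariationOn.Icc_add_Icc f (s := Set.univ) hc'd' hd'd (Set.mem_univ d')
      simpa using this
    have heq : eVariationOn f (Set.Icc c d) = eVariationOn f (Set.Icc c' d') := by
      rw [← split1, hz1, zero_add, ← split2, hz2, add_zero]
    have split3 : eVariationOn f (Set.Icc a c') + eVariationOn f (Set.Icc c' d')
        = eVariationOn f (Set.Icc a d') := by
      have := eVariationOn.Icc_add_Icc f (s := Set.univ) hac' hc'd' (Set.mem_univ c')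
      simpa using this
    have hwd : w d = (eVariationOn f (Set.Icc a d')).toReal := by
      simp only [hw]
      rw [max_eq_left (le_min_iff.mp had').1]
    have hwc : w c = (eVariationOn f (Set.Icc a c')).toReal := by
      simp only [hw]
      rw [min_eq_left hc'b]
    rw [heq, hwd, hwc, ← split3,
      ENNReal.toReal_add (hfin (Icc_subset_Icc le_rfl hc'b))
        (hfin (Icc_subset_Icc hac' (min_le_right _ _)))]
    ring
  -- rewrite the integral
  have hcongr : (∫ x in a..b, (eVariationOn f (Set.Icc (x - δ) (x + δ))).toReal)
      = ∫ x in a..b, (w (x + δ) - w (x - δ)) := by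
    apply intervalIntegral.integral_congr
    intro x hx
    rw [Set.uIcc_of_le hab] at hx
    exact key x hx
  rw [hcongr]
  have hint : ∀ s t : ℝ, IntervalIntegrable w volume s t :=
    fun s t => hwmono.intervalIntegrable
  have hsub : (∫ x in a..b, (w (x + δ) - w (x - δ)))
      = (∫ x in a + δ..b + δ, w x) - ∫ x in a - δ..b - δ, w x := by
    have m1 : Monotone (fun x : ℝ => w (x + δ)) := fun u v h => hwmono (by linarith)
    have m2 : Monotone (fun x : ℝ => w (x - δ)) := fun u v h => hwmono (by linarith)
    rw [intervalIntegral.integral_sub m1.intervalIntegrable m2.intervalIntegrable,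
      intervalIntegral.integral_comp_add_right,
      intervalIntegral.integral_comp_sub_right]
  rw [hsub]
  have adj1 : (∫ x in a - δ..b - δ, w x) + (∫ x in b - δ..b + δ, w x)
      = ∫ x in a - δ..b + δ, w x :=
    intervalIntegral.integral_add_adjacent_intervals (hint _ _) (hint _ _)
  have adj2 : (∫ x in a - δ..a + δ, w x) + (∫ x in a + δ..b + δ, w x)
      = ∫ x in a - δ..b + δ, w x :=
    intervalIntegral.integral_add_adjacent_intervals (hint _ _) (hint _ _)
  have hb1 : (∫ x in b - δ..b + δ, w x) ≤ 2 * δ * M := by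
    have : (∫ x in b - δ..b + δ, w x) ≤ ∫ _ in b - δ..b + δ, M := by
      apply intervalIntegral.integral_mono_on (by linarith) (hint _ _)
        intervalIntegrable_const
      intro x _
      exact hwle x
    rw [intervalIntegral.integral_const] at this
    calc (∫ x in b - δ..b + δ, w x) ≤ (b + δ - (b - δ)) • M := this
      _ = 2 * δ * M := by rw [smul_eq_mul]; ring_nf
  have hb2 : 0 ≤ ∫ x in a - δ..a + δ, w x :=
    intervalIntegral.integral_nonneg (by linarith) (fun x _ => hwnonneg x)
  linarith
end

section
/- Let $f:[a,b]\to\mathbb{R}$ be of bounded variation, $x\in(a,b)$, and $T_nf(x)=\int_a^b\mathcal{K}_n(x,t)f(t)dt$ with $\int_a^b|\mathcal{K}_n(x,t)|dt\le M(x)$. Then for all $\delta>0$ and $n$: $|T_nf(x)-\tfrac12[f(x+)+f(x-)]|\le 2\widetilde{\omega}(f,x,\delta)M(x)+\|f\|_\infty\big(4\beta_n(x,\delta)+\alpha_n(x)+|T_n(\mathrm{sign}(\cdot-x))(x)|\big)$. -/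
open Set MeasureTheory Filter Topology

/-- The left local quasi-modulus of `f` at `x`, with left limit value `fl`. -/
noncomputable def leftQuasiMod (f : ℝ → ℝ) (fl : ℝ) (a b x δ : ℝ) : ℝ :=
  sSup {r : ℝ | ∃ t ∈ Set.Ico (x - δ) x ∩ Set.Icc a b, r = |fl - f t|}

/-- The right local quasi-modulus of `f` at `x`, with right limit value `fr`. -/
noncomputable def rightQuasiMod (f : ℝ → ℝ) (fr : ℝ) (a b x δ : ℝ) : ℝ :=
  sSup {r : ℝ | ∃ t ∈ Set.Ioc x (x + δ) ∩ Set.Icc a b, r = |fr - f t|}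

lemma measurable_realSign : Measurable Real.sign := by
  have h : Real.sign = fun r : ℝ => if r < 0 then (-1 : ℝ) else if 0 < r then 1 else 0 := by
    funext r; rfl
  rw [h]
  exact Measurable.ite (measurableSet_lt measurable_id measurable_const) measurable_const
    (Measurable.ite (measurableSet_lt measurable_const measurable_id) measurable_const
      measurable_const)

lemma abs_realSign_le (r : ℝ) : |Real.sign r| ≤ 1 := by
  rcases Real.sign_apply_eq r with h | h | h <;> rw [h] <;> norm_num

set_option maxHeartbeats 1600000 in
/-- Pointwise estimate for integral operators `T_n f(x) = ∫_a^b K_n(x,t) f(t) dt`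
at a (possible) discontinuity point `x ∈ (a,b)` of a BV function `f`:
`|T_n f(x) - (f(x+)+f(x-))/2| ≤ 2 ω̃(f,x,δ) M(x)
  + ‖f‖_∞ (4 β_n(x,δ) + α_n(x) + |T_n(sign(·-x))(x)|)`. -/
theorem stmt15 (a b x δ M : ℝ) (K : ℝ → ℝ → ℝ) (f : ℝ → ℝ) (fl fr : ℝ)
    (hab : a ≤ b) (hx : x ∈ Set.Ioo a b) (hδ : 0 < δ)
    (hBV : BoundedVariationOn f (Set.Icc a b))
    (hfl : Tendsto f (𝓝[<] x) (𝓝 fl)) (hfr : Tendsto f (𝓝[>] x) (𝓝 fr))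
    (hK : IntegrableOn (K x) (Set.Icc a b))
    (hM : (∫ t in Set.Icc a b, |K x t|) ≤ M) :
    |(∫ t in Set.Icc a b, K x t * f t) - (fr + fl) / 2| ≤
      2 * max (leftQuasiMod f fl a b x δ) (rightQuasiMod f fr a b x δ) * M
      + sSup ((fun t => |f t|) '' Set.Icc a b) *
          (4 * (∫ t in Set.Icc a b ∩ {t : ℝ | δ ≤ |x - t|}, |K x t|)
            + |(∫ t in Set.Icc a b, K x t) - 1|
            + |∫ t in Set.Icc a b, K x t * Real.sign (t - x)|) := by
  obtain ⟨hax, hxb⟩ := hx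
  set S := sSup ((fun t => |f t|) '' Set.Icc a b) with hSdef
  set Wl := leftQuasiMod f fl a b x δ with hWldef
  set Wr := rightQuasiMod f fr a b x δ with hWrdef
  set W := max Wl Wr with hWdef
  set c := (fr + fl) / 2 with hcdef
  set d := (fr - fl) / 2 with hddef
  set g : ℝ → ℝ := fun t => f t - c - d * Real.sign (t - x) with hgdef
  set V := (eVariationOn f (Set.Icc a b)).toReal with hVdef
  -- boundedness of f on [a,b]
  have hfbd : ∀ t ∈ Set.Icc a b, |f t| ≤ |f a| + V := by
    intro t ht
    have h1 : |f t - f a| ≤ V := by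
      have := hBV.dist_le ht (Set.left_mem_Icc.2 hab)
      rwa [Real.dist_eq] at this
    have h2 : |f t| - |f a| ≤ |f t - f a| := abs_sub_abs_le_abs_sub _ _
    linarith
  have hbddS : BddAbove ((fun t => |f t|) '' Set.Icc a b) := by
    refine ⟨|f a| + V, ?_⟩
    rintro r ⟨t, ht, rfl⟩
    exact hfbd t ht
  have hSle : ∀ t ∈ Set.Icc a b, |f t| ≤ S := fun t ht => le_csSup hbddS ⟨t, ht, rfl⟩
  have hS0 : 0 ≤ S := le_trans (abs_nonneg _) (hSle a ⟨le_rfl, hab⟩)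
  -- bounds on fl, fr
  have hmemL : ∀ᶠ t in 𝓝[<] x, t ∈ Set.Icc a b := by
    filter_upwards [Ioo_mem_nhdsLT hax] with t ht
    exact ⟨ht.1.le, ht.2.le.trans hxb.le⟩
  have hflS : |fl| ≤ S := by
    refine le_of_tendsto hfl.abs ?_
    filter_upwards [hmemL] with t ht using hSle t ht
  have hmemR : ∀ᶠ t in 𝓝[>] x, t ∈ Set.Icc a b := by
    filter_upwards [Ioo_mem_nhdsGT hxb] with t ht
    exact ⟨hax.le.trans ht.1.le, ht.2.le⟩
  have hfrS : |fr| ≤ S := by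
    refine le_of_tendsto hfr.abs ?_
    filter_upwards [hmemR] with t ht using hSle t ht
  have hcS : |c| ≤ S := by
    have h1 : |fr + fl| ≤ |fr| + |fl| := abs_add_le _ _
    have h2 : |c| = |fr + fl| / 2 := by rw [hcdef, abs_div]; norm_num
    linarith
  have hdS : |d| ≤ S := by
    have h1 : |fr - fl| ≤ |fr| + |fl| := abs_sub _ _
    have h2 : |d| = |fr - fl| / 2 := by rw [hddef, abs_div]; norm_num
    linarith
  -- quasi-modulus bounds
  have hbddWl : BddAbove {r : ℝ | ∃ t ∈ Set.Ico (x - δ) x ∩ Set.Icc a b, r = |fl - f t|} := by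
    refine ⟨S + S, ?_⟩
    rintro r ⟨t, ⟨_, ht2⟩, rfl⟩
    exact le_trans (abs_sub _ _) (add_le_add hflS (hSle t ht2))
  have hbddWr : BddAbove {r : ℝ | ∃ t ∈ Set.Ioc x (x + δ) ∩ Set.Icc a b, r = |fr - f t|} := by
    refine ⟨S + S, ?_⟩
    rintro r ⟨t, ⟨_, ht2⟩, rfl⟩
    exact le_trans (abs_sub _ _) (add_le_add hfrS (hSle t ht2))
  have hWl_mem : ∀ t ∈ Set.Ico (x - δ) x ∩ Set.Icc a b, |fl - f t| ≤ Wl :=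
    fun t ht => le_csSup hbddWl ⟨t, ht, rfl⟩
  have hWr_mem : ∀ t ∈ Set.Ioc x (x + δ) ∩ Set.Icc a b, |fr - f t| ≤ Wr :=
    fun t ht => le_csSup hbddWr ⟨t, ht, rfl⟩
  have hWl0 : 0 ≤ Wl := by
    have hmem : max a (x - δ / 2) ∈ Set.Ico (x - δ) x ∩ Set.Icc a b := by
      have hlt : max a (x - δ / 2) < x := max_lt hax (by linarith)
      refine ⟨⟨?_, hlt⟩, le_max_left _ _, hlt.le.trans hxb.le⟩
      exact le_trans (by linarith) (le_max_right a (x - δ / 2))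
    exact le_trans (abs_nonneg _) (hWl_mem _ hmem)
  have hW0 : 0 ≤ W := le_trans hWl0 (le_max_left _ _)
  have hM0 : 0 ≤ M := le_trans (integral_nonneg fun t => abs_nonneg _) hM
  -- measurability of f
  have hfae : AEStronglyMeasurable f (volume.restrict (Set.Icc a b)) := by
    obtain ⟨p, q, hp, hq, hpq⟩ :=
      hBV.locallyBoundedVariationOn.exists_monotoneOn_sub_monotoneOn
    rw [hpq]
    exact ((aemeasurable_restrict_of_monotoneOn measurableSet_Icc hp).sub
      (aemeasurable_restrict_of_monotoneOn measurableSet_Icc hq)).aestronglyMeasurable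
  have hKsm := hK.aestronglyMeasurable
  -- integrabilities
  have hKf : IntegrableOn (fun t => K x t * f t) (Set.Icc a b) := by
    refine Integrable.mono' (hK.abs.const_mul S) (hKsm.mul hfae) ?_
    filter_upwards [ae_restrict_mem measurableSet_Icc] with t ht
    rw [Real.norm_eq_abs, abs_mul]
    calc |K x t| * |f t| ≤ |K x t| * S :=
          mul_le_mul_of_nonneg_left (hSle t ht) (abs_nonneg _)
      _ = S * |K x t| := mul_comm _ _
  have hsgnm : AEStronglyMeasurable (fun t : ℝ => Real.sign (t - x))
      (volume.restrict (Set.Icc a b)) :=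
    (measurable_realSign.comp (measurable_id.sub measurable_const)).aestronglyMeasurable
  have hKsgn : IntegrableOn (fun t => K x t * Real.sign (t - x)) (Set.Icc a b) := by
    refine Integrable.mono' hK.abs (hKsm.mul hsgnm) ?_
    filter_upwards with t
    rw [Real.norm_eq_abs, abs_mul]
    calc |K x t| * |Real.sign (t - x)| ≤ |K x t| * 1 :=
          mul_le_mul_of_nonneg_left (abs_realSign_le _) (abs_nonneg _)
      _ = |K x t| := mul_one _
  have hgeq : ∀ t, K x t * g t
      = K x t * f t - c * K x t - d * (K x t * Real.sign (t - x)) := by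
    intro t; simp only [hgdef]; ring
  have hKg : IntegrableOn (fun t => K x t * g t) (Set.Icc a b) := by
    have h : (fun t => K x t * g t)
        = fun t => K x t * f t - c * K x t - d * (K x t * Real.sign (t - x)) :=
      funext hgeq
    rw [h]
    exact (hKf.sub (hK.const_mul c)).sub (hKsgn.const_mul d)
  -- key identity
  have hid : (∫ t in Set.Icc a b, K x t * g t)
      = (∫ t in Set.Icc a b, K x t * f t) - c * (∫ t in Set.Icc a b, K x t)
        - d * (∫ t in Set.Icc a b, K x t * Real.sign (t - x)) := by
    have hint1 : IntegrableOn (fun t => K x t * f t - c * K x t) (Set.Icc a b) := by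
      exact hKf.sub (hK.const_mul c)
    have hint2 : IntegrableOn (fun t => d * (K x t * Real.sign (t - x))) (Set.Icc a b) := by
      exact hKsgn.const_mul d
    have hint3 : IntegrableOn (fun t => c * K x t) (Set.Icc a b) := by
      exact hK.const_mul c
    simp_rw [hgeq]
    rw [integral_sub hint1 hint2, integral_sub hKf hint3, integral_const_mul, integral_const_mul]
  -- split into near and far sets
  set F := Set.Icc a b ∩ {t : ℝ | δ ≤ |x - t|} with hFdef
  have hFmeas : MeasurableSet F :=
    measurableSet_Icc.inter
      (measurableSet_le measurable_const ((measurable_const.sub measurable_id).abs))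
  set N := Set.Icc a b \ F with hNdef
  have hFsub : F ⊆ Set.Icc a b := Set.inter_subset_left
  have hNmeas : MeasurableSet N := measurableSet_Icc.diff hFmeas
  have hNsub : N ⊆ Set.Icc a b := Set.diff_subset
  have hsplit : (∫ t in Set.Icc a b, K x t * g t)
      = (∫ t in F, K x t * g t) + (∫ t in N, K x t * g t) := by
    rw [hNdef, integral_diff hFmeas hKg hFsub]; ring
  -- far bound
  have hgbd3S : ∀ t ∈ Set.Icc a b, |g t| ≤ 3 * S := by
    intro t ht
    have h1 : |g t| ≤ |f t - c| + |d * Real.sign (t - x)| := abs_sub _ _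
    have h2 : |f t - c| ≤ |f t| + |c| := abs_sub _ _
    have h3 : |d * Real.sign (t - x)| ≤ S * 1 := by
      rw [abs_mul]
      exact mul_le_mul hdS (abs_realSign_le _) (abs_nonneg _) hS0
    have h4 := hSle t ht
    linarith
  have hβ0 : 0 ≤ (∫ t in F, |K x t|) := integral_nonneg fun t => abs_nonneg _
  have hfar : |∫ t in F, K x t * g t| ≤ 3 * S * (∫ t in F, |K x t|) := by
    calc |∫ t in F, K x t * g t| ≤ ∫ t in F, |K x t| * |g t| := by
          simpa [Real.norm_eq_abs, abs_mul] using
            norm_integral_le_integral_norm (μ := volume.restrict F) (fun t => K x t * g t)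
      _ ≤ ∫ t in F, 3 * S * |K x t| := by
          have habsF : IntegrableOn (fun t => |K x t| * |g t|) F := by
            have h' := (hKg.mono_set hFsub).abs
            simp only [abs_mul] at h'
            exact h'
          refine setIntegral_mono_on habsF (((hK.mono_set hFsub).abs).const_mul _) hFmeas ?_
          intro t ht
          calc |K x t| * |g t| ≤ |K x t| * (3 * S) :=
                mul_le_mul_of_nonneg_left (hgbd3S t (hFsub ht)) (abs_nonneg _)
            _ = 3 * S * |K x t| := mul_comm _ _
      _ = 3 * S * ∫ t in F, |K x t| := integral_const_mul _ _
  -- near bound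
  have hgW : ∀ᵐ t ∂(volume.restrict N), |K x t * g t| ≤ W * |K x t| := by
    have hxnull : ∀ᵐ t : ℝ ∂(volume.restrict N), t ≠ x := by
      refine ae_restrict_of_ae ?_
      rw [ae_iff]
      simp only [ne_eq, not_not]
      have h : {t : ℝ | t = x} = {x} := by ext t; simp
      rw [h]
      exact measure_singleton x
    filter_upwards [ae_restrict_mem hNmeas, hxnull] with t ht htx
    have htIcc : t ∈ Set.Icc a b := ht.1
    have htnear : |x - t| < δ := lt_of_not_ge fun h => ht.2 ⟨ht.1, h⟩
    rw [abs_mul, mul_comm]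
    refine mul_le_mul_of_nonneg_right ?_ (abs_nonneg _)
    rcases lt_or_gt_of_ne htx with hlt | hgt
    · have hs : Real.sign (t - x) = -1 := Real.sign_of_neg (by linarith)
      have hg : g t = f t - fl := by
        simp only [hgdef, hs, hcdef, hddef]; ring
      rw [hg, abs_sub_comm]
      refine le_trans (hWl_mem t ⟨⟨?_, hlt⟩, htIcc⟩) (le_max_left _ _)
      have h := le_abs_self (x - t)
      linarith
    · have hs : Real.sign (t - x) = 1 := Real.sign_of_pos (by linarith)
      have hg : g t = f t - fr := by
        simp only [hgdef, hs, hcdef, hddef]; ring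
      rw [hg, abs_sub_comm]
      refine le_trans (hWr_mem t ⟨⟨hgt, ?_⟩, htIcc⟩) (le_max_right _ _)
      have h := neg_abs_le (x - t)
      linarith
  have hnear : |∫ t in N, K x t * g t| ≤ W * M := by
    calc |∫ t in N, K x t * g t| ≤ ∫ t in N, |K x t| * |g t| := by
          simpa [Real.norm_eq_abs, abs_mul] using
            norm_integral_le_integral_norm (μ := volume.restrict N) (fun t => K x t * g t)
      _ ≤ ∫ t in N, W * |K x t| := by
          have habsN : IntegrableOn (fun t => |K x t| * |g t|) N := by
            have h' := (hKg.mono_set hNsub).abs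
            simp only [abs_mul] at h'
            exact h'
          refine integral_mono_ae habsN (((hK.mono_set hNsub).abs).const_mul W) ?_
          filter_upwards [hgW] with t ht
          calc |K x t| * |g t| = |K x t * g t| := (abs_mul _ _).symm
            _ ≤ W * |K x t| := ht
      _ = W * ∫ t in N, |K x t| := integral_const_mul _ _
      _ ≤ W * ∫ t in Set.Icc a b, |K x t| := by
          refine mul_le_mul_of_nonneg_left ?_ hW0
          exact setIntegral_mono_set hK.abs (ae_of_all _ fun t => abs_nonneg _)
            (HasSubset.Subset.eventuallyLE hNsub)
      _ ≤ W * M := mul_le_mul_of_nonneg_left hM hW0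
  -- assemble
  have hmain : (∫ t in Set.Icc a b, K x t * f t) - c
      = (∫ t in F, K x t * g t) + (∫ t in N, K x t * g t)
        + c * ((∫ t in Set.Icc a b, K x t) - 1)
        + d * (∫ t in Set.Icc a b, K x t * Real.sign (t - x)) := by
    rw [← hsplit]
    rw [hid]; ring
  have htri : |(∫ t in Set.Icc a b, K x t * f t) - c|
      ≤ |∫ t in F, K x t * g t| + |∫ t in N, K x t * g t|
        + |c| * |(∫ t in Set.Icc a b, K x t) - 1|
        + |d| * |∫ t in Set.Icc a b, K x t * Real.sign (t - x)| := by
    rw [hmain]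
    calc |(∫ t in F, K x t * g t) + (∫ t in N, K x t * g t)
          + c * ((∫ t in Set.Icc a b, K x t) - 1)
          + d * (∫ t in Set.Icc a b, K x t * Real.sign (t - x))|
        ≤ |(∫ t in F, K x t * g t) + (∫ t in N, K x t * g t)
            + c * ((∫ t in Set.Icc a b, K x t) - 1)|
          + |d * (∫ t in Set.Icc a b, K x t * Real.sign (t - x))| := abs_add_le _ _
      _ ≤ |(∫ t in F, K x t * g t) + (∫ t in N, K x t * g t)|
          + |c * ((∫ t in Set.Icc a b, K x t) - 1)|
          + |d * (∫ t in Set.Icc a b, K x t * Real.sign (t - x))| := by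
            have := abs_add_le ((∫ t in F, K x t * g t) + (∫ t in N, K x t * g t))
              (c * ((∫ t in Set.Icc a b, K x t) - 1))
            linarith
      _ ≤ |∫ t in F, K x t * g t| + |∫ t in N, K x t * g t|
          + |c| * |(∫ t in Set.Icc a b, K x t) - 1|
          + |d| * |∫ t in Set.Icc a b, K x t * Real.sign (t - x)| := by
            have h1 := abs_add_le (∫ t in F, K x t * g t) (∫ t in N, K x t * g t)
            rw [abs_mul, abs_mul]
            linarith
  have hc1 : |c| * |(∫ t in Set.Icc a b, K x t) - 1|
      ≤ S * |(∫ t in Set.Icc a b, K x t) - 1| :=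
    mul_le_mul_of_nonneg_right hcS (abs_nonneg _)
  have hd1 : |d| * |∫ t in Set.Icc a b, K x t * Real.sign (t - x)|
      ≤ S * |∫ t in Set.Icc a b, K x t * Real.sign (t - x)| :=
    mul_le_mul_of_nonneg_right hdS (abs_nonneg _)
  have hWM : 0 ≤ W * M := mul_nonneg hW0 hM0
  have hSβ : 0 ≤ S * (∫ t in F, |K x t|) := mul_nonneg hS0 hβ0
  have h3S : 3 * S * (∫ t in F, |K x t|) ≤ 4 * S * (∫ t in F, |K x t|) := by linarith
  calc |(∫ t in Set.Icc a b, K x t * f t) - c|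
      ≤ |∫ t in F, K x t * g t| + |∫ t in N, K x t * g t|
        + |c| * |(∫ t in Set.Icc a b, K x t) - 1|
        + |d| * |∫ t in Set.Icc a b, K x t * Real.sign (t - x)| := htri
    _ ≤ 2 * W * M + S * (4 * (∫ t in F, |K x t|)
          + |(∫ t in Set.Icc a b, K x t) - 1|
          + |∫ t in Set.Icc a b, K x t * Real.sign (t - x)|) := by
        nlinarith [hfar, hnear, hc1, hd1, hWM, hSβ]
end

section
/- For the Bernstein-Durrmeyer kernel $\mathcal{K}_n(x,t)=(n+1)\sum_{k=0}^n p_{n,k}(x)p_{n,k}(t)$ on $[0,1]$, for all $x\in[0,1]$, $\delta>0$ and $n\ge1$: $\int_{\{t\in[0,1]:|x-t|\ge\delta\}}\mathcal{K}_n(x,t)\,dt \le \frac{1}{2n\delta^2}$. -/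
/-!
Chebyshev's inequality for the nonnegative weight `K_n(x, ·)` on `[0, 1]` bounds the integral by
`δ⁻² ∫₀¹ (x - t)² K_n(x, t) dt`. This second moment is computed exactly: the Beta integrals
`∫₀¹ tʲ p_{n,k}(t) dt = (k+1)⋯(k+j) / ((n+1)⋯(n+j+1))` together with the Bernstein identities
`∑ p_{n,k}(x) = 1`, `∑ k p_{n,k}(x) = n x`, `∑ k (k-1) p_{n,k}(x) = n (n-1) x²` give
`2 ((n-3) x (1-x) + 1) / ((n+2)(n+3))`, which is at most `1 / (2n)` since `x (1-x) ≤ 1/4`.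
-/

open Set MeasureTheory Finset

/-- Bernstein basis polynomial `p_{n,k}(x) = C(n,k) x^k (1-x)^{n-k}`. -/
noncomputable def bernstein' (n k : ℕ) (x : ℝ) : ℝ :=
  (n.choose k : ℝ) * x ^ k * (1 - x) ^ (n - k)

/-- The Bernstein-Durrmeyer kernel `K_n(x,t) = (n+1) ∑_{k=0}^n p_{n,k}(x) p_{n,k}(t)`. -/
noncomputable def bdKernel (n : ℕ) (x t : ℝ) : ℝ :=
  (n + 1 : ℝ) * ∑ k ∈ Finset.range (n + 1), bernstein' n k x * bernstein' n k t

open Nat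

theorem integral_pow_mul_one_sub_pow_mul_factorial (a b : ℕ) :
    (∫ t in (0 : ℝ)..1, t ^ a * (1 - t) ^ b) * (a + b + 1)! = a ! * b ! := by
  induction b generalizing a with
  | zero =>
    simp only [pow_zero, mul_one, integral_pow, add_zero, factorial_zero, cast_one]
    rw [factorial_succ]
    push_cast
    field_simp
    simp
  | succ b ih =>
    have hsplit : ∫ t in (0 : ℝ)..1, t ^ a * (1 - t) ^ (b + 1)
        = (∫ t in (0 : ℝ)..1, t ^ a * (1 - t) ^ b)
          - ∫ t in (0 : ℝ)..1, t ^ (a + 1) * (1 - t) ^ b := by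
      rw [← intervalIntegral.integral_sub (by apply Continuous.intervalIntegrable; fun_prop)
        (by apply Continuous.intervalIntegrable; fun_prop)]
      congr 1 with t
      ring
    have h0 := ih a
    have h1 := ih (a + 1)
    rw [show a + 1 + b + 1 = a + b + 1 + 1 by ring, factorial_succ (a + b + 1),
      factorial_succ a] at h1
    rw [hsplit, show a + (b + 1) + 1 = a + b + 1 + 1 by ring, factorial_succ (a + b + 1),
      factorial_succ b]
    push_cast at h0 h1 ⊢
    linear_combination (a + b + 2 : ℝ) * h0 - h1

theorem continuous_bernstein' (n k : ℕ) : Continuous (bernstein' n k) := by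
  unfold bernstein'
  fun_prop

theorem integral_pow_mul_bernstein' {n k : ℕ} (hk : k ≤ n) (j : ℕ) :
    ∫ t in (0 : ℝ)..1, t ^ j * bernstein' n k t
      = (k + 1).ascFactorial j / (n + 1).ascFactorial (j + 1) := by
  have hbeta := integral_pow_mul_one_sub_pow_mul_factorial (k + j) (n - k)
  rw [show k + j + (n - k) + 1 = n + (j + 1) by omega] at hbeta
  have hk_fact : (k ! * (k + 1).ascFactorial j : ℝ) = (k + j)! := by
    exact_mod_cast factorial_mul_ascFactorial k j
  have hn_fact : (n ! * (n + 1).ascFactorial (j + 1) : ℝ) = (n + (j + 1))! := by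
    exact_mod_cast factorial_mul_ascFactorial n (j + 1)
  have hchoose : (n.choose k * k ! * (n - k)! : ℝ) = n ! := by
    exact_mod_cast choose_mul_factorial_mul_factorial hk
  have hintegrand : ∀ t : ℝ, t ^ j * bernstein' n k t
      = n.choose k * (t ^ (k + j) * (1 - t) ^ (n - k)) := by
    intro t
    rw [bernstein', pow_add]
    ring
  simp only [hintegrand, intervalIntegral.integral_const_mul]
  rw [eq_div_iff (by positivity)]
  apply mul_left_cancel₀ (show (n ! : ℝ) ≠ 0 by positivity)
  linear_combination
    (n.choose k : ℝ) * (∫ t in (0 : ℝ)..1, t ^ (k + j) * (1 - t) ^ (n - k)) * hn_fact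
    + (n.choose k : ℝ) * hbeta - (n.choose k * (n - k)! : ℝ) * hk_fact
    + ((k + 1).ascFactorial j : ℝ) * hchoose

theorem integral_sq_sub_mul_bernstein' {n k : ℕ} (hk : k ≤ n) (x : ℝ) :
    ∫ t in (0 : ℝ)..1, (x - t) ^ 2 * bernstein' n k t
      = (x ^ 2 * (n + 2) * (n + 3) - 2 * x * (k + 1) * (n + 3) + (k + 1) * (k + 2))
        / ((n + 1) * (n + 2) * (n + 3)) := by
  have hcont : ∀ j : ℕ, IntervalIntegrable (fun t => t ^ j * bernstein' n k t) volume 0 1 :=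
    fun j => ((continuous_pow j).mul (continuous_bernstein' n k)).intervalIntegrable 0 1
  have hexpand : ∀ t : ℝ, (x - t) ^ 2 * bernstein' n k t
      = x ^ 2 * (t ^ 0 * bernstein' n k t) - 2 * x * (t ^ 1 * bernstein' n k t)
        + t ^ 2 * bernstein' n k t := by
    intro t
    ring
  simp only [hexpand]
  rw [intervalIntegral.integral_add
      (((hcont 0).const_mul _).sub ((hcont 1).const_mul _)) (hcont 2),
    intervalIntegral.integral_sub ((hcont 0).const_mul _) ((hcont 1).const_mul _),
    intervalIntegral.integral_const_mul, intervalIntegral.integral_const_mul,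
    integral_pow_mul_bernstein' hk, integral_pow_mul_bernstein' hk,
    integral_pow_mul_bernstein' hk]
  simp only [ascFactorial_succ, ascFactorial_zero]
  push_cast
  field_simp
  ring

theorem bernstein'_eq_eval (n k : ℕ) (x : ℝ) :
    bernstein' n k x = (bernsteinPolynomial ℝ n k).eval x := by
  simp [bernstein', bernsteinPolynomial]

theorem sum_bernstein' (n : ℕ) (x : ℝ) : ∑ k ∈ range (n + 1), bernstein' n k x = 1 := by
  simp [bernstein'_eq_eval, ← Polynomial.eval_finsetSum, bernsteinPolynomial.sum]

theorem sum_natCast_mul_bernstein' (n : ℕ) (x : ℝ) :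
    ∑ k ∈ range (n + 1), (k : ℝ) * bernstein' n k x = n * x := by
  simpa [bernstein'_eq_eval, Polynomial.eval_finsetSum] using
    congrArg (Polynomial.eval x) (bernsteinPolynomial.sum_smul ℝ n)

theorem sum_natCast_mul_sub_one_mul_bernstein' (n : ℕ) (x : ℝ) :
    ∑ k ∈ range (n + 1), (k : ℝ) * (k - 1) * bernstein' n k x = n * (n - 1) * x ^ 2 := by
  have hcast : ∀ m : ℕ, (m : ℝ) * ((m - 1 : ℕ) : ℝ) = m * (m - 1) := by
    rintro (_ | m) <;> simp
  simpa [bernstein'_eq_eval, Polynomial.eval_finsetSum, hcast] using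
    congrArg (Polynomial.eval x) (bernsteinPolynomial.sum_mul_smul ℝ n)

theorem continuous_bdKernel (n : ℕ) (x : ℝ) : Continuous (bdKernel n x) := by
  unfold bdKernel
  have := continuous_bernstein' n
  fun_prop

theorem integral_sq_sub_mul_bdKernel (n : ℕ) (x : ℝ) :
    ∫ t in (0 : ℝ)..1, (x - t) ^ 2 * bdKernel n x t
      = 2 * ((n - 3) * x * (1 - x) + 1) / ((n + 2) * (n + 3)) := by
  have hexpand : ∀ t, (x - t) ^ 2 * bdKernel n x t = ∑ k ∈ range (n + 1),
      (n + 1) * bernstein' n k x * ((x - t) ^ 2 * bernstein' n k t) := by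
    intro t
    simp only [bdKernel, mul_sum]
    exact sum_congr rfl fun k _ => by ring
  have hint : ∀ k ∈ range (n + 1), IntervalIntegrable
      (fun t => (n + 1) * bernstein' n k x * ((x - t) ^ 2 * bernstein' n k t)) volume 0 1 := by
    intro k _
    have := continuous_bernstein' n k
    exact (by fun_prop : Continuous _).intervalIntegrable 0 1
  -- `(k + 1) (k + 2) = k (k - 1) + 4 k + 2` makes each summand a combination of the three moments
  have hsummand : ∀ k ∈ range (n + 1),
      ∫ t in (0 : ℝ)..1, (n + 1) * bernstein' n k x * ((x - t) ^ 2 * bernstein' n k t)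
        = ((x ^ 2 * (n + 2) * (n + 3) - 2 * x * (n + 3) + 2) * bernstein' n k x
          + (4 - 2 * x * (n + 3)) * (k * bernstein' n k x)
          + k * (k - 1) * bernstein' n k x) / ((n + 2) * (n + 3)) := by
    intro k hk
    rw [intervalIntegral.integral_const_mul,
      integral_sq_sub_mul_bernstein' (Nat.lt_succ_iff.mp (mem_range.mp hk))]
    field_simp
    ring
  simp only [hexpand]
  rw [intervalIntegral.integral_finsetSum hint, sum_congr rfl hsummand, ← sum_div,
    sum_add_distrib, sum_add_distrib, ← mul_sum, ← mul_sum, sum_bernstein',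
    sum_natCast_mul_bernstein', sum_natCast_mul_sub_one_mul_bernstein']
  ring

theorem integral_sq_sub_mul_bdKernel_le {n : ℕ} (hn : 1 ≤ n) {x : ℝ} (hx : x ∈ Icc (0 : ℝ) 1) :
    ∫ t in (0 : ℝ)..1, (x - t) ^ 2 * bdKernel n x t ≤ 1 / (2 * n) := by
  have hn' : (1 : ℝ) ≤ n := by exact_mod_cast hn
  have hvar : x * (1 - x) ≤ 1 / 4 := by nlinarith [sq_nonneg (2 * x - 1)]
  have hvar0 : 0 ≤ x * (1 - x) := mul_nonneg hx.1 (sub_nonneg.2 hx.2)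
  rw [integral_sq_sub_mul_bdKernel, div_le_div_iff₀ (by positivity) (by positivity)]
  nlinarith [mul_nonneg (sub_nonneg.2 hn') hvar0, mul_nonneg (sub_nonneg.2 hn') (sub_nonneg.2 hvar)]

theorem bernstein'_nonneg (n k : ℕ) {t : ℝ} (ht : t ∈ Icc (0 : ℝ) 1) : 0 ≤ bernstein' n k t := by
  obtain ⟨h0, h1⟩ := ht
  have : 0 ≤ 1 - t := sub_nonneg.2 h1
  unfold bernstein'
  positivity

theorem bdKernel_nonneg (n : ℕ) {x t : ℝ} (hx : x ∈ Icc (0 : ℝ) 1) (ht : t ∈ Icc (0 : ℝ) 1) :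
    0 ≤ bdKernel n x t :=
  mul_nonneg (by positivity) <| sum_nonneg fun k _ =>
    mul_nonneg (bernstein'_nonneg n k hx) (bernstein'_nonneg n k ht)

theorem setIntegral_inter_le_abs_le_div_sq {α : Type*} [MeasurableSpace α] {μ : Measure α}
    {s : Set α} {f g : α → ℝ} {δ : ℝ} (hs : MeasurableSet s) (hg : Measurable g) (hδ : 0 < δ)
    (hf0 : ∀ t ∈ s, 0 ≤ f t) (hf : IntegrableOn f s μ)
    (hgf : IntegrableOn (fun t => g t ^ 2 * f t) s μ) :
    ∫ t in s ∩ {t | δ ≤ |g t|}, f t ∂μ ≤ (∫ t in s, g t ^ 2 * f t ∂μ) / δ ^ 2 := by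
  have hsub : s ∩ {t | δ ≤ |g t|} ⊆ s := inter_subset_left
  have hmeas : MeasurableSet (s ∩ {t | δ ≤ |g t|}) :=
    hs.inter (measurableSet_le measurable_const hg.abs)
  have hgf' : IntegrableOn (fun t => g t ^ 2 * f t / δ ^ 2) s μ := hgf.div_const _
  rw [← integral_div]
  calc ∫ t in s ∩ {t | δ ≤ |g t|}, f t ∂μ
      ≤ ∫ t in s ∩ {t | δ ≤ |g t|}, g t ^ 2 * f t / δ ^ 2 ∂μ := by
        refine setIntegral_mono_on (hf.mono_set hsub) (hgf'.mono_set hsub) hmeas ?_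
        rintro t ⟨hts, htδ⟩
        have hsq : δ ^ 2 ≤ g t ^ 2 := by
          rw [← sq_abs (g t)]
          exact pow_le_pow_left₀ hδ.le htδ 2
        rw [le_div_iff₀ (by positivity)]
        nlinarith [mul_le_mul_of_nonneg_left hsq (hf0 t hts)]
    _ ≤ ∫ t in s, g t ^ 2 * f t / δ ^ 2 ∂μ :=
        setIntegral_mono_set hgf'
          ((ae_restrict_iff' hs).2 (ae_of_all _ fun t ht => by have := hf0 t ht; positivity))
          hsub.eventuallyLE

/-- For the Bernstein-Durrmeyer kernel,
`∫_{t ∈ [0,1], |x-t| ≥ δ} K_n(x,t) dt ≤ 1/(2 n δ²)`. -/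
theorem stmt17 (n : ℕ) (hn : 1 ≤ n) (x δ : ℝ) (hx : x ∈ Set.Icc (0 : ℝ) 1) (hδ : 0 < δ) :
    (∫ t in Set.Icc (0 : ℝ) 1 ∩ {t : ℝ | δ ≤ |x - t|}, bdKernel n x t) ≤
      1 / (2 * n * δ ^ 2) := by
  have hK := continuous_bdKernel n x
  calc (∫ t in Icc (0 : ℝ) 1 ∩ {t | δ ≤ |x - t|}, bdKernel n x t)
      ≤ (∫ t in Icc (0 : ℝ) 1, (x - t) ^ 2 * bdKernel n x t) / δ ^ 2 :=
        setIntegral_inter_le_abs_le_div_sq (g := fun t => x - t) measurableSet_Icc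
          (by fun_prop) hδ (fun t ht => bdKernel_nonneg n hx ht) hK.integrableOn_Icc
          (by fun_prop : Continuous _).integrableOn_Icc
    _ ≤ 1 / (2 * n) / δ ^ 2 := by
        rw [integral_Icc_eq_integral_Ioc, ← intervalIntegral.integral_of_le zero_le_one]
        gcongr
        exact integral_sq_sub_mul_bdKernel_le hn hx
    _ = 1 / (2 * n * δ ^ 2) := div_div _ _ _
end
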